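/- Let F be a finite field whose characteristic does not divide |G| for a finite abelian group G, and let u, v ∈ FG satisfy FG·u = Ann(v) and FG·v = Ann(u). Then FG·u ∩ (FG·u)^⊥ = {0} if and only if FG·v = FG·v^{(-1)}. -/

import Mathlib

/-- The annihilator of a single element of the group algebra. -/
def ann {F G : Type*} [Field F] [CommGroup G] (v : MonoidAlgebra F G) :
    Ideal (MonoidAlgebra F G) where
  carrier := {x | x * v = 0}
  add_mem' := by
    intro a b ha hb
    simp only [Set.mem_setOf_eq, add_mul] at *
    rw [ha, hb, add_zero]
  zero_mem' := by simp
  smul_mem' := by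
    intro c x hx
    simp only [Set.mem_setOf_eq, smul_eq_mul] at *
    rw [mul_assoc, hx, mul_zero]

/-- `w^{(-1)} = Σ_g w_{g⁻¹} g`. -/
def inv' {F G : Type*} [Field F] [CommGroup G] (v : MonoidAlgebra F G) :
    MonoidAlgebra F G :=
  MonoidAlgebra.ofCoeff (Finsupp.equivMapDomain (Equiv.inv G) v.coeff)

/-!
Since the characteristic of `F` does not divide `|G|`, `F[G]` is semisimple (Maschke), and the
hypotheses make `F[G] u` and `F[G] v` complementary ideals. The pairing is
`⟨w, c⟩ = (w c^{(-1)})(1)`, so `(F[G] u)^⊥ = Ann(u^{(-1)})`, which is the image `F[G] v^{(-1)}` of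
`Ann(u) = F[G] v` under the involution `w ↦ w^{(-1)}`. Thus the hull `F[G] u ∩ (F[G] u)^⊥` vanishes
iff `F[G] v^{(-1)}` is disjoint from `F[G] u`, i.e. contained in its complement `F[G] v`; as the
involution is an automorphism of order two, containment is already equality.
-/

open MonoidAlgebra

namespace Ideal

variable {R : Type*} [CommSemiring R]

theorem le_of_isCompl_of_disjoint {I J K : Ideal R} (hIJ : IsCompl I J) (hK : Disjoint K I) :
    K ≤ J :=
  calc K = K * (I ⊔ J) := by rw [hIJ.sup_eq_top, mul_top]
    _ = K * I ⊔ K * J := mul_sup K I J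
    _ ≤ K ⊓ I ⊔ J := sup_le_sup mul_le_inf Ideal.mul_le_right
    _ = J := by rw [hK.eq_bot, bot_sup_eq]

theorem span_singleton_sup_eq_top [ComplementedLattice (Ideal R)] {u v : R}
    (h : ∀ x, x * v = 0 → x ∈ span {u}) : span {u} ⊔ span {v} = ⊤ := by
  obtain ⟨W, hW⟩ := exists_isCompl (span {v} : Ideal R)
  -- `W * span {v} ≤ W ⊓ span {v} = ⊥`, so the complement `W` annihilates `v`.
  have hWu : W ≤ span {u} := fun w hw => h w <| by
    have : w * v ∈ W ⊓ span {v} := ⟨W.mul_mem_right v hw, mem_span_singleton'.mpr ⟨w, rfl⟩⟩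
    rwa [hW.symm.inf_eq_bot, mem_bot] at this
  rw [eq_top_iff, ← hW.symm.sup_eq_top]
  exact sup_le_sup_right hWu _

theorem isCompl_span_singleton [ComplementedLattice (Ideal R)] {u v : R}
    (h : ∀ x, x * v = 0 → x ∈ span {u}) (huv : u * v = 0) :
    IsCompl (span {u} : Ideal R) (span {v}) := by
  have hsup := span_singleton_sup_eq_top h
  refine ⟨disjoint_iff.mpr ?_, codisjoint_iff.mpr hsup⟩
  rw [← mul_eq_inf_of_coprime hsup, span_singleton_mul_span_singleton, huv, span_singleton_eq_bot]

end Ideal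

section GroupAlgebra

variable {F G : Type*} [Field F] [CommGroup G]

theorem inv'_eq_domCongr (v : MonoidAlgebra F G) : inv' v = domCongr F F (MulEquiv.inv G) v := by
  ext g
  simp [inv', coeff_ofCoeff, Finsupp.equivMapDomain_apply]

theorem inv'_inv' (v : MonoidAlgebra F G) : inv' (inv' v) = v := by
  ext g; simp [inv'_eq_domCongr]

theorem inv'_mul (a b : MonoidAlgebra F G) : inv' (a * b) = inv' a * inv' b := by
  simp only [inv'_eq_domCongr, map_mul]

theorem inv'_eq_zero_iff {v : MonoidAlgebra F G} : inv' v = 0 ↔ v = 0 := by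
  rw [inv'_eq_domCongr, map_eq_zero_iff _ (AlgEquiv.injective _)]

theorem inv'_single (g : G) (r : F) : inv' (single g r) = single g⁻¹ r := by
  simp [inv'_eq_domCongr]

theorem inv'_mem_span_inv' {v x : MonoidAlgebra F G} (hx : x ∈ Ideal.span {v}) :
    inv' x ∈ Ideal.span {inv' v} := by
  obtain ⟨a, rfl⟩ := Ideal.mem_span_singleton'.mp hx
  exact Ideal.mem_span_singleton'.mpr ⟨inv' a, (inv'_mul a v).symm⟩

theorem mem_span_inv'_iff {v x : MonoidAlgebra F G} :
    x ∈ Ideal.span {inv' v} ↔ inv' x ∈ Ideal.span {v} :=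
  ⟨fun h => inv'_inv' v ▸ inv'_mem_span_inv' h, fun h => inv'_inv' x ▸ inv'_mem_span_inv' h⟩

theorem span_singleton_eq_span_inv'_of_le {v : MonoidAlgebra F G}
    (h : Ideal.span {inv' v} ≤ Ideal.span {v}) : Ideal.span {v} = Ideal.span {inv' v} :=
  le_antisymm (fun _ hx => mem_span_inv'_iff.mpr (h (inv'_mem_span_inv' hx))) h

theorem mem_span_inv'_iff_mul_inv'_eq_zero {u v : MonoidAlgebra F G}
    (hv : Ideal.span {v} = ann u) {x : MonoidAlgebra F G} :
    x ∈ Ideal.span {inv' v} ↔ x * inv' u = 0 := by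
  rw [mem_span_inv'_iff, hv, ← inv'_eq_zero_iff, inv'_mul, inv'_inv']
  rfl

variable [Fintype G]

theorem sum_coeff_mul_coeff_eq_coeff_one (w c : MonoidAlgebra F G) :
    ∑ g : G, w.coeff g * c.coeff g = (w * inv' c).coeff 1 := by
  rw [coeff_mul_apply_right, Finsupp.sum_fintype _ _ (fun _ => by simp)]
  exact Fintype.sum_equiv (Equiv.inv G) _ _ (fun g => by simp [inv'_eq_domCongr])

theorem forall_mem_span_sum_coeff_mul_coeff_eq_zero_iff (u w : MonoidAlgebra F G) :
    (∀ c ∈ Ideal.span {u}, ∑ g : G, w.coeff g * c.coeff g = 0) ↔ w * inv' u = 0 := by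
  simp only [sum_coeff_mul_coeff_eq_coeff_one]
  constructor
  · intro h
    ext g
    -- pairing `w` with the translate `g u` reads off the coefficient of `w * inv' u` at `g`
    have := h (single g 1 * u) (Ideal.mul_mem_left _ _ (Ideal.mem_span_singleton_self u))
    rw [inv'_mul, inv'_single, mul_left_comm, coeff_single_mul_apply] at this
    simpa using this
  · rintro h c hc
    obtain ⟨a, rfl⟩ := Ideal.mem_span_singleton'.mp hc
    rw [inv'_mul, mul_left_comm, h, mul_zero, coeff_zero, Finsupp.zero_apply]

end GroupAlgebra

theorem stmt_12_general (F G : Type*) [Field F] [CommGroup G] [Fintype G]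
    (hchar : ¬ (ringChar F ∣ Fintype.card G))
    (u v : MonoidAlgebra F G)
    (hu : (Ideal.span {u} : Ideal (MonoidAlgebra F G)) = ann v)
    (hv : (Ideal.span {v} : Ideal (MonoidAlgebra F G)) = ann u) :
    {w : MonoidAlgebra F G | w ∈ (Ideal.span {u} : Ideal (MonoidAlgebra F G)) ∧
        ∀ c ∈ (Ideal.span {u} : Ideal (MonoidAlgebra F G)), ∑ g : G, w.coeff g * c.coeff g = 0}
      = {0} ↔
    (Ideal.span {v} : Ideal (MonoidAlgebra F G)) = Ideal.span {inv' v} := by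
  have : NeZero (Nat.card G : F) := ⟨by rwa [Nat.card_eq_fintype_card, Ne, ringChar.spec]⟩
  have huv : u * v = 0 := show u ∈ ann v from hu ▸ Ideal.mem_span_singleton_self u
  have hcompl : IsCompl (Ideal.span {u}) (Ideal.span {v}) :=
    Ideal.isCompl_span_singleton (fun x hx => hu ▸ hx) huv
  have hdual : {w : MonoidAlgebra F G | w ∈ (Ideal.span {u} : Ideal (MonoidAlgebra F G)) ∧
      ∀ c ∈ (Ideal.span {u} : Ideal (MonoidAlgebra F G)), ∑ g : G, w.coeff g * c.coeff g = 0} =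
      ↑(Ideal.span {u} ⊓ Ideal.span {inv' v}) := by
    ext w
    rw [Set.mem_ofPred_eq, forall_mem_span_sum_coeff_mul_coeff_eq_zero_iff,
      ← mem_span_inv'_iff_mul_inv'_eq_zero hv]
    rfl
  rw [hdual, ← Submodule.bot_coe (R := MonoidAlgebra F G), SetLike.coe_set_eq]
  constructor
  · intro h
    exact span_singleton_eq_span_inv'_of_le
      (Ideal.le_of_isCompl_of_disjoint hcompl (disjoint_iff.mpr h).symm)
  · intro h
    rw [← h, hcompl.inf_eq_bot]

theorem stmt_12 (F G : Type*) [Field F] [Fintype F] [CommGroup G] [Fintype G]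
    (hchar : ¬ (ringChar F ∣ Fintype.card G))
    (u v : MonoidAlgebra F G)
    (hu : (Ideal.span {u} : Ideal (MonoidAlgebra F G)) = ann v)
    (hv : (Ideal.span {v} : Ideal (MonoidAlgebra F G)) = ann u) :
    {w : MonoidAlgebra F G | w ∈ (Ideal.span {u} : Ideal (MonoidAlgebra F G)) ∧
        ∀ c ∈ (Ideal.span {u} : Ideal (MonoidAlgebra F G)), ∑ g : G, w.coeff g * c.coeff g = 0}
      = {0} ↔
    (Ideal.span {v} : Ideal (MonoidAlgebra F G)) = Ideal.span {inv' v} :=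
  stmt_12_general F G hchar u v hu hv
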